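/- Overlap Rotation Lemma: Let α be a periodic semi-infinite string. There exists an integer k ∈ [1, period(α)] such that for every finite string s inequivalent to α, |ov(s, α[k])| < period(s) + (1/2)·period(α), where α[k] denotes the semi-infinite suffix of α starting at its k-th character and ov(s, α[k]) is the longest suffix of s that is a prefix of α[k]. -/
import Mathlib

/-- A string `s` has periodicity `p` if `s[i] = s[i+p]` for all valid indices. -/
def hasPeriod {A : Type*} (s : List A) (p : ℕ) : Prop :=
  ∀ i, i + p < s.length → s[i]? = s[i + p]?

/-- `periodN s` is the smallest positive periodicity of `s`, i.e. `|pref(s,s)|`. -/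
noncomputable def periodN {A : Type*} (s : List A) : ℕ :=
  sInf {p | 0 < p ∧ hasPeriod s p}

/-- `infWordO x` models the semi-infinite periodic string `x^∞` (for nonempty `x`). -/
def infWordO {A : Type*} (x : List A) : ℕ → Option A := fun n => x[n % x.length]?

/-- `ovInf s β` is the length of the longest suffix of the finite string `s`
that is a prefix of the semi-infinite string `β`. -/
def ovInf {A : Type*} [DecidableEq A] (s : List A) (β : ℕ → Option A) : ℕ :=
  Nat.findGreatest (fun k => ∀ i < k, s[s.length - k + i]? = β i) s.length


namespace ORLAux

variable {A : Type*}

/-- window of length `m` at position `i` of the infinite word `f`. -/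
def Wd (f : ℕ → A) (m i : ℕ) : List A := (List.range m).map fun t => f (i + t)

theorem Wd_cons (f : ℕ → A) (m i : ℕ) : Wd f (m+1) i = f i :: Wd f m (i+1) := by
  unfold Wd
  rw [List.range_succ_eq_map, List.map_cons, List.map_map]
  rw [Nat.add_zero]
  congr 1
  refine List.map_congr_left fun t ht => ?_
  simp only [Function.comp_apply]
  congr 1
  omega

theorem Wd_take (f : ℕ → A) (m i : ℕ) : (Wd f (m+1) i).take m = Wd f m i := by
  unfold Wd
  rw [← List.map_take, List.take_range]
  congr 2
  exact Nat.min_eq_left (Nat.le_succ m)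

theorem per_mul {f : ℕ → A} {q : ℕ} (hf : ∀ n, f (n + q) = f n) :
    ∀ (c n : ℕ), f (n + q * c) = f n := by
  intro c
  induction c with
  | zero => simp
  | succ c ih =>
    intro n
    have : n + q * (c + 1) = (n + q * c) + q := by ring
    rw [this, hf, ih]

theorem per_mod {f : ℕ → A} {q : ℕ} (hf : ∀ n, f (n + q) = f n) (n : ℕ) :
    f n = f (n % q) := by
  conv_lhs => rw [← Nat.mod_add_div n q]
  exact per_mul hf _ _

theorem shift_mod {f : ℕ → A} {q : ℕ} (hf : ∀ n, f (n + q) = f n) (a t : ℕ) :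
    f (a % q + t) = f (a + t) := by
  rw [per_mod hf (a % q + t), Nat.mod_add_mod, ← per_mod hf (a + t)]

theorem Wd_mod {f : ℕ → A} {q : ℕ} (hf : ∀ n, f (n + q) = f n) (m i : ℕ) :
    Wd f m (i % q) = Wd f m i :=
  List.map_congr_left fun t _ => shift_mod hf i t

variable [DecidableEq A]

/-- number of distinct cyclic windows of length `m`. -/
def Cc (f : ℕ → A) (q m : ℕ) : ℕ := ((Finset.range q).image (Wd f m)).card

theorem S_eq (f : ℕ → A) (q m : ℕ) :
    (Finset.range q).image (Wd f m)
      = ((Finset.range q).image (Wd f (m+1))).image (List.take m) := by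
  rw [Finset.image_image]
  exact (Finset.image_congr fun i _ => Wd_take f m i).symm

theorem Cc_mono (f : ℕ → A) (q m : ℕ) : Cc f q m ≤ Cc f q (m+1) := by
  unfold Cc
  rw [S_eq]
  exact Finset.card_image_le


theorem Cc_strict {f : ℕ → A} {q : ℕ} (hq : 0 < q) (hf : ∀ n, f (n + q) = f n)
    (hA : ∀ d, 0 < d → d < q → ∃ n, f n ≠ f (n + d)) (m : ℕ) (hm : 1 ≤ m)
    (hle : Cc f q (m+1) ≤ Cc f q m) : Cc f q m = q := by
  have hcard : (((Finset.range q).image (Wd f (m+1))).image (List.take m)).card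
      = ((Finset.range q).image (Wd f (m+1))).card := by
    refine le_antisymm Finset.card_image_le ?_
    have h1 := congrArg Finset.card (S_eq f q m)
    unfold Cc at hle
    omega
  have hinj := Finset.injOn_of_card_image_eq hcard
  have hmem : ∀ i : ℕ, Wd f (m+1) i ∈ (Finset.range q).image (Wd f (m+1)) := by
    intro i
    rw [← Wd_mod hf]
    exact Finset.mem_image_of_mem _ (Finset.mem_range.mpr (Nat.mod_lt _ hq))
  have hext : ∀ i j : ℕ, Wd f m i = Wd f m j → Wd f (m+1) i = Wd f (m+1) j := by
    intro i j h
    exact hinj (hmem i) (hmem j) (by rw [Wd_take, Wd_take, h])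
  have hprop : ∀ t i j, Wd f m i = Wd f m j → Wd f m (i + t) = Wd f m (j + t) := by
    intro t
    induction t with
    | zero => intro i j h; simpa using h
    | succ t ih =>
      intro i j h
      have h2 := hext _ _ (ih i j h)
      rw [Wd_cons, Wd_cons] at h2
      have h3 := (List.cons.inj h2).2
      rw [show i + t + 1 = i + (t+1) from by omega, show j + t + 1 = j + (t+1) from by omega] at h3
      exact h3
  have hhead : ∀ i j, Wd f m i = Wd f m j → ∀ t, f (i + t) = f (j + t) := by
    intro i j h t
    have h1 := hprop t i j h
    obtain ⟨m', rfl⟩ : ∃ m', m = m' + 1 := ⟨m - 1, by omega⟩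
    rw [Wd_cons, Wd_cons] at h1
    exact (List.cons.inj h1).1
  have key : ∀ i j, i < q → j < q → i < j → Wd f m i = Wd f m j → False := by
    intro i j hiq hjq hij hW
    have hd : ∀ n, f n = f (n + (j - i)) := by
      intro n
      have h1 := hhead i j hW (n + q - i)
      rw [show i + (n + q - i) = n + q from by omega,
        show j + (n + q - i) = n + (j - i) + q from by omega, hf, hf] at h1
      exact h1
    obtain ⟨n, hn⟩ := hA (j - i) (by omega) (by omega)
    exact hn (hd n)
  have hinj2 : Set.InjOn (Wd f m) (Finset.range q) := by
    intro i hi j hj hW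
    rw [Finset.coe_range, Set.mem_Iio] at hi hj
    rcases Nat.lt_trichotomy i j with h | h | h
    · exact absurd hW (fun hW => key i j hi hj h hW)
    · exact h
    · exact absurd hW.symm (fun hW => key j i hj hi h hW)
  unfold Cc
  rw [Finset.card_image_of_injOn hinj2, Finset.card_range]

theorem core {f : ℕ → A} {q : ℕ} (hq : 0 < q) (hf : ∀ n, f (n + q) = f n)
    (hA : ∀ d, 0 < d → d < q → ∃ n, f n ≠ f (n + d)) :
    ∃ k' < q, ∀ j < q, Wd f ((q+1)/2) j = Wd f ((q+1)/2) k' → j = k' := by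
  by_contra hcon
  push_neg at hcon
  set ℓ := (q+1)/2 with hℓ
  have hC1 : 1 ≤ Cc f q 1 := by
    refine Finset.card_pos.mpr ⟨Wd f 1 0, ?_⟩
    exact Finset.mem_image_of_mem _ (Finset.mem_range.mpr hq)
  have hmin : ∀ m, 1 ≤ m → q ≤ Cc f q m ∨ m - 1 + Cc f q 1 ≤ Cc f q m := by
    intro m hm
    induction m with
    | zero => omega
    | succ m ih =>
      rcases Nat.eq_zero_or_pos m with rfl | hm1
      · right; simp
      · have h1 := ih hm1
        have h2 := Cc_mono f q m
        rcases Nat.lt_or_ge (Cc f q m) q with h | h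
        · have h3 : Cc f q m < Cc f q (m+1) := by
            rcases Nat.lt_or_ge (Cc f q m) (Cc f q (m+1)) with h' | h'
            · exact h'
            · rw [Cc_strict hq hf hA m hm1 h'] at h; omega
          omega
        · left; omega
  have hfib : 2 * Cc f q ℓ ≤ q := by
    have hmaps : ∀ i ∈ Finset.range q, Wd f ℓ i ∈ (Finset.range q).image (Wd f ℓ) :=
      fun i hi => Finset.mem_image_of_mem _ hi
    have hsum := Finset.card_eq_sum_card_fiberwise hmaps
    have h2 : ∀ b ∈ (Finset.range q).image (Wd f ℓ),
        2 ≤ ((Finset.range q).filter (fun i => Wd f ℓ i = b)).card := by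
      intro b hb
      obtain ⟨i, hi, rfl⟩ := Finset.mem_image.mp hb
      obtain ⟨j, hjq, hjeq, hjne⟩ := hcon i (Finset.mem_range.mp hi)
      refine Finset.one_lt_card.mpr ⟨i, ?_, j, ?_, fun h => hjne h.symm⟩
      · exact Finset.mem_filter.mpr ⟨hi, rfl⟩
      · exact Finset.mem_filter.mpr ⟨Finset.mem_range.mpr hjq, hjeq⟩
    calc 2 * Cc f q ℓ = ∑ _b ∈ (Finset.range q).image (Wd f ℓ), 2 := by
          rw [Finset.sum_const, smul_eq_mul, Cc, mul_comm]
      _ ≤ ∑ b ∈ (Finset.range q).image (Wd f ℓ),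
            ((Finset.range q).filter (fun i => Wd f ℓ i = b)).card := Finset.sum_le_sum h2
      _ = (Finset.range q).card := hsum.symm
      _ = q := Finset.card_range q
  have hl1 : 1 ≤ ℓ := by omega
  have hCl := hmin ℓ hl1
  obtain ⟨hC1eq, hq2⟩ : Cc f q 1 = 1 ∧ 2 ≤ q := by
    rcases hCl with h | h <;> omega
  have hall : ∀ i j, i < q → j < q → f i = f j := by
    intro i j hi hj
    have hcard : ((Finset.range q).image (Wd f 1)).card ≤ 1 := le_of_eq hC1eq
    have h1 := Finset.card_le_one.mp hcard (Wd f 1 i)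
      (Finset.mem_image_of_mem _ (Finset.mem_range.mpr hi)) (Wd f 1 j)
      (Finset.mem_image_of_mem _ (Finset.mem_range.mpr hj))
    simpa [Wd] using h1
  obtain ⟨n, hn⟩ := hA 1 one_pos (by omega)
  refine hn ?_
  rw [per_mod hf n, per_mod hf (n+1)]
  exact hall _ _ (Nat.mod_lt _ hq) (Nat.mod_lt _ hq)

end ORLAux


/-- Overlap Rotation Lemma: let `α = x^∞` be a periodic semi-infinite string with minimal
period word `x` (so `period(α) = |x|`). There is a `k ∈ [1, period(α)]` such that for every
finite nonempty string `s` inequivalent to `α` (i.e. `pref(s,s)` is not a rotation of `x`),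
`|ov(s, α[k])| < period(s) + period(α)/2`, where `α[k]` is the semi-infinite suffix of `α`
starting at its `k`-th character. -/
theorem overlap_rotation_lemma {A : Type*} [DecidableEq A] (x : List A) (hx : x ≠ [])
    (α : ℕ → Option A) (hα : α = infWordO x)
    (hxmin : ∀ y : List A, y ≠ [] → α = infWordO y → x.length ≤ y.length) :
    ∃ k, 1 ≤ k ∧ k ≤ x.length ∧
      ∀ s : List A, s ≠ [] → ¬ (s.take (periodN s) ~r x) →
        2 * ovInf s (fun n => α (n + (k - 1))) < 2 * periodN s + x.length := by
  subst hα
  have hq : 0 < x.length := List.length_pos_iff.mpr hx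
  set q := x.length with hqdef
  set f : ℕ → A := fun n => x.get ⟨n % q, Nat.mod_lt _ hq⟩ with hfdef
  have halpha : ∀ n, infWordO x n = some (f n) := by
    intro n
    show x[n % x.length]? = _
    rw [← hqdef, List.getElem?_eq_getElem (Nat.mod_lt _ hq)]
    rfl
  have hgetf : ∀ (a : ℕ) (h : a % q < q), x[a % q]'(by omega) = f a := fun a h => rfl
  have hf : ∀ n, f (n + q) = f n := by
    intro n
    simp only [hfdef]
    congr 1
    exact Fin.ext (Nat.add_mod_right n q)
  have hA : ∀ d, 0 < d → d < q → ∃ n, f n ≠ f (n + d) := by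
    intro d hd0 hdq
    by_contra hcontra
    push_neg at hcontra
    have h' : ∀ n, f (n + d) = f n := fun n => (hcontra n).symm
    have hlen : (x.take d).length = d := by
      rw [List.length_take]; omega
    have hy := hxmin (x.take d) (by
      intro hc
      rw [hc] at hlen
      simp at hlen
      omega) (by
      funext n
      have hnd : n % d < d := Nat.mod_lt _ hd0
      rw [halpha n]
      show _ = (x.take d)[n % (x.take d).length]?
      rw [hlen, List.getElem?_take, if_pos (Nat.mod_lt _ hd0)]
      rw [List.getElem?_eq_getElem (by omega : n % d < x.length)]
      have h1 : f n = f (n % d) := ORLAux.per_mod h' n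
      have h2 : f (n % d) = x[n % d]'(by omega) := by
        have h3 : (n % d) % q = n % d := Nat.mod_eq_of_lt (by omega)
        simp only [hfdef]
        congr 1
        exact Fin.ext h3
      rw [h1, h2])
    rw [hlen] at hy
    omega
  obtain ⟨k', hk'q, huniq⟩ := ORLAux.core hq hf hA
  refine ⟨k' + 1, le_add_self, by omega, ?_⟩
  intro s hs hrot
  simp only [Nat.add_sub_cancel]
  set p := periodN s with hpdef
  have hsl : 0 < s.length := List.length_pos_iff.mpr hs
  have hmemS : s.length ∈ {r | 0 < r ∧ hasPeriod s r} := ⟨hsl, fun i h => absurd h (by omega)⟩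
  have hpmem : 0 < p ∧ hasPeriod s p := by
    rw [hpdef, periodN]; exact Nat.sInf_mem ⟨_, hmemS⟩
  obtain ⟨hp0, hper⟩ := hpmem
  have hple : p ≤ s.length := by
    rw [hpdef, periodN]; exact Nat.sInf_le hmemS
  have hpmin : ∀ r, 0 < r → hasPeriod s r → p ≤ r := fun r h1 h2 => by
    rw [hpdef, periodN]; exact Nat.sInf_le ⟨h1, h2⟩
  set β : ℕ → Option A := fun n => infWordO x (n + k') with hβ
  by_contra hcon
  push_neg at hcon
  set L := ovInf s β with hLdef
  have hL : L ≤ s.length := Nat.findGreatest_le s.length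
  have hmatch : ∀ i < L, s[s.length - L + i]? = β i := by
    have h := Nat.findGreatest_spec (P := fun k => ∀ i < k, s[s.length - k + i]? = β i)
      (n := s.length) (Nat.zero_le _) (fun i hi => absurd hi (Nat.not_lt_zero i))
    exact h
  set g : ℕ → A := fun n => f (n + k') with hg
  have hwin : ∀ i, i < L → s[s.length - L + i]? = some (g i) := by
    intro i hi
    rw [hmatch i hi, hβ]
    exact halpha _
  set c := s.length - L with hc
  set ℓ := (q+1)/2 with hℓ
  have hLlb : p + ℓ ≤ L := by omega
  have hdown : ∀ a, a < s.length → s[a]? = s[a % p]? := by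
    intro a
    induction a using Nat.strong_induction_on with
    | _ a ih =>
      intro ha
      rcases Nat.lt_or_ge a p with h | h
      · rw [Nat.mod_eq_of_lt h]
      · have h1 := hper (a - p) (by omega)
        rw [show a - p + p = a from by omega] at h1
        rw [← h1, ih (a - p) (by omega) (by omega), Nat.mod_eq_sub_mod h]
  have hgq : ∀ n, g (n + q) = g n := by
    intro n
    simp only [hg]
    rw [show n + q + k' = (n + k') + q from by omega, hf]
  have hkey : ∀ j, j < p → s[j]? = some (g ((j + (p - c % p)) % p)) := by
    intro j hj
    set w := (j + (p - c % p)) % p with hw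
    have hwp : w < p := Nat.mod_lt _ hp0
    have h1 := hwin w (by omega)
    have hid : (c + w) % p = j % p := by
      rw [hw, Nat.add_mod_mod]
      obtain ⟨e, he⟩ := (Nat.dvd_sub_mod (n := p) c)
      have hcm : c % p ≤ c := Nat.mod_le c p
      have hcm2 : c % p < p := Nat.mod_lt _ hp0
      rw [show c + (j + (p - c % p)) = p * e + (j + p) from by omega]
      rw [Nat.mul_add_mod, Nat.add_mod_right]
    have h2 : s[j]? = s[c + w]? := by
      rw [hdown j (by omega), hdown (c + w) (by omega), hid]
    rw [h2, h1]
  rcases Nat.eq_zero_or_pos (p % q) with hd0 | hdpos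
  · -- q divides p
    have hdvd : q ∣ p := Nat.dvd_of_mod_eq_zero hd0
    rcases Nat.lt_or_ge q p with hqp | hpq'
    · -- p > q : s has period q, contradicting minimality
      have hps : hasPeriod s q := by
        intro m hm
        rw [hdown m (by omega), hdown (m + q) (by omega)]
        rw [hkey (m % p) (Nat.mod_lt _ hp0), hkey ((m + q) % p) (Nat.mod_lt _ hp0)]
        have hidx : ((m % p + (p - c % p)) % p) % q = (((m + q) % p + (p - c % p)) % p) % q := by
          rw [Nat.mod_mod_of_dvd _ hdvd, Nat.mod_mod_of_dvd _ hdvd]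
          rw [← Nat.mod_add_mod (m % p), Nat.mod_mod_of_dvd _ hdvd]
          rw [← Nat.mod_add_mod ((m+q) % p), Nat.mod_mod_of_dvd _ hdvd]
          rw [Nat.add_mod_right]
        have hgab : g ((m % p + (p - c % p)) % p) = g (((m + q) % p + (p - c % p)) % p) := by
          rw [ORLAux.per_mod hgq ((m % p + (p - c % p)) % p), hidx,
            ← ORLAux.per_mod hgq (((m + q) % p + (p - c % p)) % p)]
        rw [hgab]
      have := hpmin q hq hps
      omega
    · -- p = q : s.take p is a rotation of x
      have hpq : p = q := by
        have := Nat.le_of_dvd hp0 hdvd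
        omega
      exfalso
      apply hrot
      have hlen1 : (s.take p).length = p := by
        rw [List.length_take]; omega
      have heq : x.rotate ((p - c % p) + k') = s.take p := by
        apply List.ext_getElem
        · rw [List.length_rotate, hlen1, ← hqdef, hpq]
        · intro i h1 h2
          rw [List.getElem_rotate, List.getElem_take]
          have h3 := hkey i (by omega)
          have h4 : s[i]? = some (s[i]'(by omega)) := List.getElem?_eq_getElem (by omega)
          have h5 : s[i]'(by omega) = g ((i + (p - c % p)) % p) :=
            Option.some.inj (h4.symm.trans h3)
          rw [h5]
          have h6 : g ((i + (p - c % p)) % p) =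
              x[((i + (p - c % p)) % p + k') % q]'(Nat.mod_lt _ hq) := rfl
          rw [h6]
          congr 1
          rw [← hqdef]
          rw [hpq, Nat.mod_add_mod]
          congr 1
          omega
      exact (List.IsRotated.symm ⟨_, heq⟩)
  · -- d := p % q ≠ 0 : contradiction with uniqueness of window k'
    set d := p % q with hd
    have hdq : d < q := Nat.mod_lt _ hq
    have hgp : ∀ i, i + p < L → g i = g (i + p) := by
      intro i hip
      have h1 := hwin i (by omega)
      have h2 := hwin (i + p) hip
      have h3 := hper (c + i) (by omega)
      rw [show c + i + p = c + (i + p) from by omega] at h3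
      rw [h1, h2] at h3
      exact Option.some.inj h3
    have hgmul : ∀ e n, g (n + q * e) = g n := ORLAux.per_mul hgq
    have hgd : ∀ i, i < ℓ → g i = g (i + d) := by
      intro i hi
      have h1 := hgp i (by omega)
      set E := q * (p / q) with hE
      have hEd : E + d = p := by
        rw [hE, hd]; exact Nat.div_add_mod p q
      rw [show i + p = (i + d) + q * (p / q) from by omega, hgmul] at h1
      exact h1
    have hW : ORLAux.Wd f ℓ ((k' + d) % q) = ORLAux.Wd f ℓ k' := by
      refine List.map_congr_left fun t ht => ?_
      rw [List.mem_range] at ht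
      rw [ORLAux.shift_mod hf]
      have e1 : g t = f (k' + t) := by simp only [hg]; congr 1; omega
      have e2 : g (t + d) = f (k' + d + t) := by simp only [hg]; congr 1; omega
      rw [← e2, ← hgd t ht, e1]
    have hk := huniq _ (Nat.mod_lt _ hq) hW
    rcases Nat.lt_or_ge (k' + d) q with h | h
    · rw [Nat.mod_eq_of_lt h] at hk; omega
    · rw [Nat.mod_eq_sub_mod h, Nat.mod_eq_of_lt (by omega)] at hk; omega
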